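/- arXiv:1711.05224 — 5 statements merged into one kernel-verified Lean document; each statement's English description precedes it below -/
import Mathlib

section
/- For the gradient flow ẋ = -x₁, ẋ₂ = x₂ (i.e., ẋ = -Ax with A = diag(1,-1)) and any 0 < ε < r, any solution starting on the boundary of the ball B_r(0) that at some later time enters the ball B_ε(0) must spend at least time log(r/ε) inside B_r(0) before entering B_ε(0). -/
open MeasureTheory

/-!
Along the flow, `‖x t‖² = x₁(0)² e^{-2t} + x₂(0)² e^{2t}` is a convex function of `t`; since it
equals `r²` at `t = 0` and is below `ε² < r²` at `t₁`, it stays below `r²` on all of `(0, t₁]`.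
On the other hand `‖x t‖ ≥ e^{-t} ‖x 0‖ = e^{-t} r` for `t ≥ 0`, so reaching `B_ε(0)` at time `t₁`
forces `t₁ > log (r / ε)`.
-/

open Real Set

theorem ConvexOn.lt_of_mem_Ioc {𝕜 β : Type*} [Field 𝕜] [LinearOrder 𝕜] [IsStrictOrderedRing 𝕜]
    [AddCommMonoid β] [LinearOrder β] [IsOrderedCancelAddMonoid β] [Module 𝕜 β]
    [PosSMulStrictMono 𝕜 β] {s : Set 𝕜} {f : 𝕜 → β} {a b t : 𝕜} {c : β}
    (hf : ConvexOn 𝕜 s f) (ha : a ∈ s) (hb : b ∈ s) (hfa : f a ≤ c) (hfb : f b < c)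
    (ht : t ∈ Ioc a b) : f t < c := by
  by_contra! hct
  exact (hf.le_right_of_left_le'' ha hb ht.1 ht.2 (hfa.trans hct)).not_gt (hfb.trans_le hct)

theorem convexOn_exp_neg : ConvexOn ℝ univ fun t : ℝ ↦ exp (-t) :=
  convexOn_exp.comp_linearMap (-LinearMap.id)

def IsSaddleFlow (x : ℝ → EuclideanSpace ℝ (Fin 2)) : Prop :=
  ∀ t : ℝ, x t = (WithLp.equiv 2 (Fin 2 → ℝ)).symm ![x 0 0 * exp (-t), x 0 1 * exp t]

namespace IsSaddleFlow

variable {x : ℝ → EuclideanSpace ℝ (Fin 2)}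

theorem norm_sq_eq (hx : IsSaddleFlow x) (t : ℝ) :
    ‖x t‖ ^ 2 = x 0 0 ^ 2 * exp (-t) ^ 2 + x 0 1 ^ 2 * exp t ^ 2 := by
  rw [hx t, EuclideanSpace.norm_sq_eq]
  simp [Fin.sum_univ_two, mul_pow]

theorem convexOn_norm_sq (hx : IsSaddleFlow x) : ConvexOn ℝ univ fun t ↦ ‖x t‖ ^ 2 := by
  simp_rw [hx.norm_sq_eq]
  have hexp_sq : ConvexOn ℝ univ fun t : ℝ ↦ exp t ^ 2 :=
    convexOn_exp.pow (fun t _ ↦ (exp_pos t).le) 2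
  have hexp_neg_sq : ConvexOn ℝ univ fun t : ℝ ↦ exp (-t) ^ 2 :=
    convexOn_exp_neg.pow (fun t _ ↦ (exp_pos _).le) 2
  exact (hexp_neg_sq.smul (sq_nonneg (x 0 0))).add (hexp_sq.smul (sq_nonneg (x 0 1)))

theorem exp_neg_mul_norm_le (hx : IsSaddleFlow x) {t : ℝ} (ht : 0 ≤ t) :
    exp (-t) * ‖x 0‖ ≤ ‖x t‖ := by
  have h0 := hx.norm_sq_eq 0
  simp only [neg_zero, exp_zero, one_pow, mul_one] at h0
  have hexp : exp (-t) ^ 2 ≤ exp t ^ 2 := by gcongr; linarith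
  refine (pow_le_pow_iff_left₀ (by positivity) (norm_nonneg _) two_ne_zero).mp ?_
  calc (exp (-t) * ‖x 0‖) ^ 2 = x 0 0 ^ 2 * exp (-t) ^ 2 + x 0 1 ^ 2 * exp (-t) ^ 2 := by
        rw [mul_pow, h0]; ring
    _ ≤ x 0 0 ^ 2 * exp (-t) ^ 2 + x 0 1 ^ 2 * exp t ^ 2 := by gcongr
    _ = ‖x t‖ ^ 2 := (hx.norm_sq_eq t).symm

theorem norm_lt_of_mem_Ioc (hx : IsSaddleFlow x) {r t₁ t : ℝ} (h0 : ‖x 0‖ ≤ r)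
    (h₁ : ‖x t₁‖ < r) (ht : t ∈ Ioc 0 t₁) : ‖x t‖ < r := by
  have hr : 0 ≤ r := (norm_nonneg _).trans h0
  refine (pow_lt_pow_iff_left₀ (norm_nonneg _) hr two_ne_zero).mp ?_
  exact hx.convexOn_norm_sq.lt_of_mem_Ioc (mem_univ 0) (mem_univ t₁)
    (pow_le_pow_left₀ (norm_nonneg _) h0 2) (pow_lt_pow_left₀ h₁ (norm_nonneg _) two_ne_zero) ht

theorem log_div_lt (hx : IsSaddleFlow x) {ε t : ℝ} (h0 : 0 < ‖x 0‖) (ht : 0 ≤ t)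
    (hε : ‖x t‖ < ε) : log (‖x 0‖ / ε) < t := by
  have hε_pos : 0 < ε := (norm_nonneg _).trans_lt hε
  rw [log_lt_iff_lt_exp (by positivity), div_lt_iff₀ hε_pos]
  calc ‖x 0‖ = exp t * (exp (-t) * ‖x 0‖) := by
        rw [← mul_assoc, ← exp_add, add_neg_cancel, exp_zero, one_mul]
    _ < exp t * ε := by gcongr; exact (hx.exp_neg_mul_norm_le ht).trans_lt hε

end IsSaddleFlow

/-- For the linear gradient flow `ẋ = -Ax`, `A = diag(1,-1)`, with solution
`x(t) = (x₁(0)e^{-t}, x₂(0)e^{t})` starting on `∂B_r(0)` and entering `B_ε(0)`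
at time `t₁ > 0` (`0 < ε < r`), the time spent inside `B_r(0)` before entering
`B_ε(0)` is at least `log(r/ε)`. -/
theorem stmt_11 (r ε : ℝ) (hε : 0 < ε) (hεr : ε < r)
    (x : ℝ → EuclideanSpace ℝ (Fin 2))
    (hx : ∀ t : ℝ, x t = (WithLp.equiv 2 (Fin 2 → ℝ)).symm
      ![x 0 0 * Real.exp (-t), x 0 1 * Real.exp t])
    (hstart : ‖x 0‖ = r)
    (t₁ : ℝ) (ht₁ : 0 < t₁) (henter : ‖x t₁‖ < ε) :
    ENNReal.ofReal (Real.log (r / ε)) ≤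
      volume {t ∈ Set.Icc (0:ℝ) t₁ | ‖x t‖ < r} := by
  have hflow : IsSaddleFlow x := hx
  have hlog : log (r / ε) < t₁ :=
    hstart ▸ hflow.log_div_lt (hstart ▸ hε.trans hεr) ht₁.le henter
  have hsub : Ioc 0 t₁ ⊆ {t ∈ Icc 0 t₁ | ‖x t‖ < r} := fun t ht ↦
    ⟨Ioc_subset_Icc_self ht, hflow.norm_lt_of_mem_Ioc hstart.le (henter.trans hεr) ht⟩
  calc ENNReal.ofReal (log (r / ε)) ≤ ENNReal.ofReal t₁ := ENNReal.ofReal_le_ofReal hlog.le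
    _ = volume (Ioc 0 t₁) := by rw [Real.volume_Ioc, sub_zero]
    _ ≤ _ := measure_mono hsub
end

section
/- Let A = diag(λ₁,…,λ_d) with |λᵢ| = 1 for all i. For any solution of the linear gradient flow ẋ = -Ax and any r > 0, the total arc length of the portion of the trajectory lying inside the ball B_r(0) is at most 2r√d. -/
open MeasureTheory Real Set

/-!
Since `|λᵢ| = 1`, the speed `‖ẋ(t)‖` equals `‖x(t)‖`, and grouping the coordinates with
`λᵢ = 1` and `λᵢ = -1` gives `‖x(t)‖² = (a e^{-t})² + (b e^t)²`. Hence `‖x(t)‖ ≤ a e^{-t} + b e^t`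
while each summand is itself at most `‖x(t)‖ ≤ r` on the time set in question. An exponential
`c e^{±t}` bounded by `r` on a set of times has integral at most `r` there, so the arc length
inside the ball is at most `2r ≤ 2r√d`.
-/

section
variable {c r : ℝ} {S : Set ℝ}

theorem integrableOn_mul_exp_and_setIntegral_le (hc : 0 ≤ c) (hr : 0 < r)
    (hS : ∀ t ∈ S, c * exp t ≤ r) :
    IntegrableOn (fun t => c * exp t) S ∧ ∫ t in S, c * exp t ≤ r := by
  rcases hc.eq_or_lt with rfl | hc
  · simpa using hr.le
  have hsub : S ⊆ Iic (log (r / c)) := fun t ht =>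
    (le_log_iff_exp_le (div_pos hr hc)).mpr ((le_div_iff₀' hc).mpr (hS t ht))
  have hint : IntegrableOn (fun t => c * exp t) (Iic (log (r / c))) :=
    (integrableOn_exp_Iic _).const_mul c
  refine ⟨hint.mono_set hsub, ?_⟩
  calc ∫ t in S, c * exp t
      ≤ ∫ t in Iic (log (r / c)), c * exp t :=
        setIntegral_mono_set hint (.of_forall fun t => by positivity) (.of_forall hsub)
    _ = r := by
        rw [integral_const_mul, integral_exp_Iic, exp_log (div_pos hr hc)]
        field_simp

theorem integrableOn_mul_exp_neg_and_setIntegral_le (hc : 0 ≤ c) (hr : 0 < r)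
    (hS : ∀ t ∈ S, c * exp (-t) ≤ r) :
    IntegrableOn (fun t => c * exp (-t)) S ∧ ∫ t in S, c * exp (-t) ≤ r := by
  obtain ⟨hint, hle⟩ := integrableOn_mul_exp_and_setIntegral_le (S := -S) hc hr
    fun t ht => by simpa using hS (-t) ht
  refine ⟨by simpa using hint.comp_neg, ?_⟩
  have hreflect := (Measure.measurePreserving_neg volume).setIntegral_preimage_emb
    measurableEmbedding_neg (fun t => c * exp t) (-S)
  rw [Set.neg_preimage, neg_neg] at hreflect
  rwa [hreflect]
end

theorem max_le_sqrt_sq_add_sq_le_add {u w : ℝ} (hu : 0 ≤ u) (hw : 0 ≤ w) :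
    max u w ≤ √(u ^ 2 + w ^ 2) ∧ √(u ^ 2 + w ^ 2) ≤ u + w := by
  refine ⟨max_le ?_ ?_, ?_⟩
  · exact le_sqrt_of_sq_le (by nlinarith)
  · exact le_sqrt_of_sq_le (by nlinarith)
  · exact (sqrt_le_left (by positivity)).mpr (by nlinarith)

theorem setIntegral_sqrt_exp_neg_add_exp_le {a b r : ℝ} {S : Set ℝ} (ha : 0 ≤ a) (hb : 0 ≤ b)
    (hr : 0 < r) (hS : ∀ t ∈ S, √((a * exp (-t)) ^ 2 + (b * exp t) ^ 2) ≤ r) :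
    ∫ t in S, √((a * exp (-t)) ^ 2 + (b * exp t) ^ 2) ≤ 2 * r := by
  have hbounds t := max_le_sqrt_sq_add_sq_le_add (mul_nonneg ha (exp_pos (-t)).le)
    (mul_nonneg hb (exp_pos t).le)
  obtain ⟨hia, hIa⟩ := integrableOn_mul_exp_neg_and_setIntegral_le ha hr
    fun t ht => (le_max_left _ _).trans ((hbounds t).1.trans (hS t ht))
  obtain ⟨hib, hIb⟩ := integrableOn_mul_exp_and_setIntegral_le hb hr
    fun t ht => (le_max_right _ _).trans ((hbounds t).1.trans (hS t ht))
  calc ∫ t in S, √((a * exp (-t)) ^ 2 + (b * exp t) ^ 2)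
      ≤ ∫ t in S, (a * exp (-t) + b * exp t) :=
        integral_mono_of_nonneg (.of_forall fun t => sqrt_nonneg _) (hia.add hib)
          (.of_forall fun t => (hbounds t).2)
    _ = (∫ t in S, a * exp (-t)) + ∫ t in S, b * exp t := integral_add hia hib
    _ ≤ 2 * r := by linarith

theorem norm_toLp_mul_of_abs_eq_one {ι : Type*} [Fintype ι] {μ : ι → ℝ} (hμ : ∀ i, |μ i| = 1)
    (v : EuclideanSpace ℝ ι) : ‖WithLp.toLp 2 (fun i => μ i * v i)‖ = ‖v‖ := by
  simp [EuclideanSpace.norm_eq, hμ]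

theorem exists_norm_diag_flow_eq {ι : Type*} [Fintype ι] {lam : ι → ℝ} (hlam : ∀ i, |lam i| = 1)
    (c : EuclideanSpace ℝ ι) : ∃ a b : ℝ, 0 ≤ a ∧ 0 ≤ b ∧ ∀ t : ℝ,
      ‖WithLp.toLp 2 (fun i => c i * exp (-lam i * t))‖ =
        √((a * exp (-t)) ^ 2 + (b * exp t) ^ 2) := by
  classical
  refine ⟨√(∑ i with lam i = 1, c i ^ 2), √(∑ i with lam i ≠ 1, c i ^ 2), sqrt_nonneg _,
    sqrt_nonneg _, fun t => ?_⟩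
  have hA : (0 : ℝ) ≤ ∑ i with lam i = 1, c i ^ 2 := Finset.sum_nonneg fun _ _ => sq_nonneg _
  have hB : (0 : ℝ) ≤ ∑ i with lam i ≠ 1, c i ^ 2 := Finset.sum_nonneg fun _ _ => sq_nonneg _
  rw [EuclideanSpace.norm_eq, mul_pow, mul_pow, sq_sqrt hA, sq_sqrt hB, Finset.sum_mul,
    Finset.sum_mul, Finset.sum_filter, Finset.sum_filter, ← Finset.sum_add_distrib]
  congr 1
  refine Finset.sum_congr rfl fun i _ => ?_
  rcases abs_eq zero_le_one |>.mp (hlam i) with h | h <;> norm_num [h, mul_pow]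

/-- For the linear gradient flow `ẋ = -Ax` with `A = diag(λ₁,…,λ_d)`,
`|λᵢ| = 1`, the arc length of any solution inside the ball `B_r(0)` is at most
`2r√d`. -/
theorem stmt_12 {d : ℕ} (lam : Fin d → ℝ) (hlam : ∀ i, |lam i| = 1)
    (x0 : EuclideanSpace ℝ (Fin d)) (r : ℝ) (hr : 0 < r)
    (x x' : ℝ → EuclideanSpace ℝ (Fin d))
    (hx : ∀ t : ℝ, x t = (WithLp.equiv 2 (Fin d → ℝ)).symm
      (fun i => x0 i * Real.exp (-(lam i) * t)))
    (hx' : ∀ t : ℝ, x' t = (WithLp.equiv 2 (Fin d → ℝ)).symm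
      (fun i => -(lam i) * (x0 i * Real.exp (-(lam i) * t)))) :
    (∫ t in {t : ℝ | ‖x t‖ ≤ r}, ‖x' t‖) ≤ 2 * r * Real.sqrt d := by
  rcases d.eq_zero_or_pos with rfl | hd
  · simp [Subsingleton.elim (x' _) 0]
  obtain ⟨a, b, ha, hb, hnorm⟩ := exists_norm_diag_flow_eq hlam x0
  have hspeed t : ‖x' t‖ = ‖x t‖ := by
    simpa [hx, hx'] using norm_toLp_mul_of_abs_eq_one (μ := fun i => -lam i)
      (by simpa using hlam) (x t)
  have hnx t : ‖x t‖ = √((a * exp (-t)) ^ 2 + (b * exp t) ^ 2) := by simpa [hx] using hnorm t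
  calc ∫ t in {t | ‖x t‖ ≤ r}, ‖x' t‖
      = ∫ t in {t | ‖x t‖ ≤ r}, √((a * exp (-t)) ^ 2 + (b * exp t) ^ 2) := by
        congr 1; funext t; rw [hspeed, hnx]
    _ ≤ 2 * r := setIntegral_sqrt_exp_neg_add_exp_le ha hb hr fun t ht => hnx t ▸ ht
    _ ≤ 2 * r * √d :=
        le_mul_of_one_le_right (by positivity) (one_le_sqrt.mpr (by exact_mod_cast hd))
end

section
/- Let A = diag(λ₁,…,λ_d) be diagonal and invertible. For any solution x(t) of ẋ = -Ax not passing through 0, the time spent by the corresponding normalized flow (equivalently, the arc length of x) inside B_r(0) is at most 2√d · r. -/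
/-!
Each coordinate `x0ᵢ e^{-λᵢ t}` of the flow is monotone in `t`, so its total variation over a
time interval `[a, b]` is at most `|xᵢ(a)| + |xᵢ(b)|`. Bounding `‖ẋ‖` by the `ℓ¹` norm of `ẋ`
and the `ℓ¹` norm of `x` by `√d ‖x‖`, the arc length over `[a, b]` is at most `2√d r` whenever
both endpoints lie in the ball. The set of times spent in the ball is closed, so its intersections
with `[-n, n]` lie between their own extreme points, and the bound passes to the whole set.
-/

open MeasureTheory Set Real

theorem EuclideanSpace.norm_le_sum_norm {𝕜 ι : Type*} [RCLike 𝕜] [Fintype ι]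
    (v : EuclideanSpace 𝕜 ι) : ‖v‖ ≤ ∑ i, ‖v i‖ := by
  rw [EuclideanSpace.norm_eq, Real.sqrt_le_iff]
  exact ⟨by positivity, Finset.sum_sq_le_sq_sum_of_nonneg fun i _ => norm_nonneg _⟩

theorem EuclideanSpace.sum_norm_le_sqrt_card_mul_norm {𝕜 ι : Type*} [RCLike 𝕜] [Fintype ι]
    (v : EuclideanSpace 𝕜 ι) : ∑ i, ‖v i‖ ≤ √(Fintype.card ι) * ‖v‖ := by
  calc ∑ i, ‖v i‖ = ∑ i, ‖v i‖ * 1 := by simp only [mul_one]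
    _ ≤ √(∑ i, ‖v i‖ ^ 2) * √(∑ _i : ι, (1 : ℝ) ^ 2) := Real.sum_mul_le_sqrt_mul_sqrt _ _ _
    _ = √(Fintype.card ι) * ‖v‖ := by simp [EuclideanSpace.norm_eq, mul_comm]

theorem integral_abs_deriv_mul_exp_le (c lam a b : ℝ) :
    ∫ t in a..b, |-lam * (c * exp (-lam * t))| ≤ |c * exp (-lam * a)| + |c * exp (-lam * b)| := by
  -- The integrand has constant sign, so `-(sign lam) |c| e^{-lam t}` is an antiderivative.
  have hderiv : ∀ t, HasDerivAt (fun t => -(SignType.sign lam * |c|) * exp (-lam * t))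
      |-lam * (c * exp (-lam * t))| t := by
    intro t
    refine (((hasDerivAt_id t).const_mul (-lam)).exp.const_mul
      (-(SignType.sign lam * |c|))).congr_deriv ?_
    rw [abs_mul, abs_mul, abs_neg, abs_of_pos (exp_pos _), ← sign_mul_self lam]
    simp only [id]
    ring
  rw [intervalIntegral.integral_eq_sub_of_hasDerivAt (fun t _ => hderiv t)
    ((by fun_prop : Continuous fun t => |-lam * (c * exp (-lam * t))|).intervalIntegrable a b)]
  have hsign : |(SignType.sign lam : ℝ)| ≤ 1 := by
    rcases lt_trichotomy lam 0 with h | h | h <;> simp [h]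
  have hca := mul_nonneg (abs_nonneg c) (exp_pos (-lam * a)).le
  have hcb := mul_nonneg (abs_nonneg c) (exp_pos (-lam * b)).le
  simp only [abs_mul, abs_of_pos (exp_pos _)]
  nlinarith [abs_le.mp hsign]

theorem setIntegral_le_of_forall_intervalIntegral_le {f : ℝ → ℝ} (hf : LocallyIntegrable f)
    (hf0 : ∀ t, 0 ≤ f t) {S : Set ℝ} (hS : IsClosed S) {C : ℝ} (hC : 0 ≤ C)
    (h : ∀ a ∈ S, ∀ b ∈ S, a ≤ b → ∫ t in a..b, f t ≤ C) :
    ∫ t in S, f t ≤ C := by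
  by_cases hint : IntegrableOn f S
  swap
  · rw [integral_undef hint]
    exact hC
  set s : ℕ → Set ℝ := fun n => S ∩ Icc (-n) n
  have hmono : Monotone s := fun m n hmn =>
    inter_subset_inter_right S (Icc_subset_Icc (by simpa using hmn) (by simpa using hmn))
  have hunion : ⋃ n, s n = S := by
    refine Subset.antisymm (iUnion_subset fun n => inter_subset_left) fun t ht => ?_
    obtain ⟨n, hn⟩ := exists_nat_ge |t|
    exact mem_iUnion.2 ⟨n, ht, abs_le.1 hn⟩
  have hlim := tendsto_setIntegral_of_monotone (fun n => hS.measurableSet.inter measurableSet_Icc)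
    hmono (hunion ▸ hint)
  rw [hunion] at hlim
  refine le_of_tendsto' hlim fun n => ?_
  change ∫ t in s n, f t ≤ C
  obtain hempty | hne := (s n).eq_empty_or_nonempty
  · simp [hempty, hC]
  have hK : IsCompact (s n) := isCompact_Icc.inter_left hS
  have hab : sInf (s n) ≤ sSup (s n) := csInf_le_csSup hne hK.bddBelow hK.bddAbove
  calc ∫ t in s n, f t ≤ ∫ t in Icc (sInf (s n)) (sSup (s n)), f t :=
        setIntegral_mono_set (hf.integrableOn_isCompact isCompact_Icc) (ae_of_all _ hf0)
          (ae_of_all _ fun t ht => ⟨csInf_le hK.bddBelow ht, le_csSup hK.bddAbove ht⟩)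
    _ = ∫ t in sInf (s n)..sSup (s n), f t := by
        rw [integral_Icc_eq_integral_Ioc, intervalIntegral.integral_of_le hab]
    _ ≤ C := h _ (hK.sInf_mem hne).1 _ (hK.sSup_mem hne).1 hab

theorem stmt_13_general {d : ℕ} (lam : Fin d → ℝ)
    (x0 : EuclideanSpace ℝ (Fin d)) (r : ℝ) (hr : 0 < r)
    (x x' : ℝ → EuclideanSpace ℝ (Fin d))
    (hx : ∀ t : ℝ, x t = (WithLp.equiv 2 (Fin d → ℝ)).symm
      (fun i => x0 i * Real.exp (-(lam i) * t)))
    (hx' : ∀ t : ℝ, x' t = (WithLp.equiv 2 (Fin d → ℝ)).symm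
      (fun i => -(lam i) * (x0 i * Real.exp (-(lam i) * t)))) :
    (∫ t in {t : ℝ | ‖x t‖ ≤ r}, ‖x' t‖) ≤ 2 * Real.sqrt d * r := by
  have hx_cont : Continuous x := by
    simp only [funext hx, WithLp.equiv_symm_apply]
    exact (PiLp.continuous_toLp 2 _).comp (by fun_prop)
  have hx'_cont : Continuous x' := by
    simp only [funext hx', WithLp.equiv_symm_apply]
    exact (PiLp.continuous_toLp 2 _).comp (by fun_prop)
  have hsum (t : ℝ) : ∑ i, ‖x t i‖ ≤ √d * ‖x t‖ := by
    simpa using EuclideanSpace.sum_norm_le_sqrt_card_mul_norm (x t)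
  refine setIntegral_le_of_forall_intervalIntegral_le hx'_cont.norm.locallyIntegrable
    (fun _ => norm_nonneg _) (isClosed_le hx_cont.norm continuous_const) (by positivity)
    fun a ha b hb hab => ?_
  calc ∫ t in a..b, ‖x' t‖ ≤ ∫ t in a..b, ∑ i, ‖x' t i‖ :=
        intervalIntegral.integral_mono_on hab (hx'_cont.norm.intervalIntegrable a b)
          ((by fun_prop : Continuous fun t => ∑ i, ‖x' t i‖).intervalIntegrable a b)
          fun t _ => EuclideanSpace.norm_le_sum_norm (x' t)
    _ = ∑ i, ∫ t in a..b, ‖x' t i‖ := intervalIntegral.integral_finsetSum fun i _ =>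
        (by fun_prop : Continuous fun t => ‖x' t i‖).intervalIntegrable a b
    _ ≤ ∑ i, (‖x a i‖ + ‖x b i‖) := Finset.sum_le_sum fun i _ => by
        simpa [hx, hx'] using integral_abs_deriv_mul_exp_le (x0 i) (lam i) a b
    _ ≤ √d * ‖x a‖ + √d * ‖x b‖ := by
        rw [Finset.sum_add_distrib]
        exact add_le_add (hsum a) (hsum b)
    _ ≤ 2 * √d * r := by
        have := mul_le_mul_of_nonneg_left (add_le_add ha hb) (sqrt_nonneg d)
        linarith

/-- For the linear gradient flow `ẋ = -Ax` with `A = diag(λ₁,…,λ_d)` invertible,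
the arc length of any solution not passing through `0` inside the ball `B_r(0)`
(equivalently the time spent there by the normalized flow) is at most `2√d·r`. -/
theorem stmt_13 {d : ℕ} (lam : Fin d → ℝ) (hlam : ∀ i, lam i ≠ 0)
    (x0 : EuclideanSpace ℝ (Fin d)) (r : ℝ) (hr : 0 < r)
    (x x' : ℝ → EuclideanSpace ℝ (Fin d))
    (hx : ∀ t : ℝ, x t = (WithLp.equiv 2 (Fin d → ℝ)).symm
      (fun i => x0 i * Real.exp (-(lam i) * t)))
    (hx' : ∀ t : ℝ, x' t = (WithLp.equiv 2 (Fin d → ℝ)).symm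
      (fun i => -(lam i) * (x0 i * Real.exp (-(lam i) * t))))
    (hnz : ∀ t : ℝ, x t ≠ 0) :
    (∫ t in {t : ℝ | ‖x t‖ ≤ r}, ‖x' t‖) ≤ 2 * Real.sqrt d * r :=
  stmt_13_general lam x0 r hr x x' hx hx'
end

section
/- Let f : ℝ^d → ℝ be C³ with third derivatives uniformly bounded by Ĉ (componentwise), and let x* be a critical point whose Hessian has all eigenvalue magnitudes at least λ_min > 0. Then f has no other critical point in the ball of radius 2λ_min/Ĉ around x*: for 0 < ‖x - x*‖ < 2λ_min/Ĉ, ∇f(x) ≠ 0. -/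
/-!
Since `‖D³f‖ ≤ Ĉ`, the Hessian is `Ĉ`-Lipschitz, so the first-order Taylor expansion of `∇f`
at `x*` gives `‖∇f(x) - H(x - x*)‖ ≤ (Ĉ/2)‖x - x*‖²`. Expanding in an orthonormal eigenbasis of
`H` gives `‖H v‖ ≥ λmin‖v‖`. Hence `‖∇f(x)‖ ≥ λmin r - (Ĉ/2)r² > 0` for `0 < r = ‖x - x*‖ < 2λmin/Ĉ`.
-/

open InnerProductSpace

section Taylor

variable {E F : Type*} [NormedAddCommGroup E] [NormedSpace ℝ E] [NormedAddCommGroup F]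
  [NormedSpace ℝ F]

theorem norm_fderiv_fderiv_sub_le_of_norm_iteratedFDeriv_three_le {f : E → F} {C : ℝ}
    (hf : ContDiff ℝ 3 f) (hC : ∀ x, ‖iteratedFDeriv ℝ 3 f x‖ ≤ C) (x y : E) :
    ‖fderiv ℝ (fderiv ℝ f) y - fderiv ℝ (fderiv ℝ f) x‖ ≤ C * ‖y - x‖ := by
  have hf2 : ContDiff ℝ 1 (fderiv ℝ (fderiv ℝ f)) :=
    (hf.fderiv_right (m := 2) (by norm_num)).fderiv_right (by norm_num)
  refine convex_univ.norm_image_sub_le_of_norm_fderiv_le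
    (fun z _ => hf2.differentiable one_ne_zero z) (fun z _ => ?_) trivial trivial
  rw [← norm_iteratedFDeriv_zero (𝕜 := ℝ), norm_iteratedFDeriv_fderiv, norm_iteratedFDeriv_fderiv,
    norm_iteratedFDeriv_fderiv]
  exact hC z

theorem norm_sub_sub_apply_le_of_norm_fderiv_sub_le {g : E → F} {g' : E → E →L[ℝ] F} {x₀ : E}
    {L : ℝ} (hg : ∀ y, HasFDerivAt g (g' y) y) (hL : ∀ y, ‖g' y - g' x₀‖ ≤ L * ‖y - x₀‖)
    (x : E) : ‖g x - g x₀ - g' x₀ (x - x₀)‖ ≤ L / 2 * ‖x - x₀‖ ^ 2 := by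
  set v := x - x₀
  -- the Taylor remainder along the segment; its derivative is at most `L‖v‖²t`
  let ψ : ℝ → F := fun t => g (x₀ + t • v) - g x₀ - t • g' x₀ v
  have hψ (t : ℝ) : HasDerivAt ψ ((g' (x₀ + t • v) - g' x₀) v) t := by
    have hline : HasDerivAt (fun t : ℝ => x₀ + t • v) v t := by
      simpa using ((hasDerivAt_id t).smul_const v).const_add x₀
    refine ((((hg _).comp_hasDerivAt t hline).sub_const (g x₀)).sub
      ((hasDerivAt_id t).smul_const (g' x₀ v))).congr_deriv ?_
    simp
  have hψ' (t : ℝ) (ht : t ∈ Set.Ico (0 : ℝ) 1) :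
      ‖(g' (x₀ + t • v) - g' x₀) v‖ ≤ L * ‖v‖ ^ 2 * t :=
    calc ‖(g' (x₀ + t • v) - g' x₀) v‖ ≤ L * ‖x₀ + t • v - x₀‖ * ‖v‖ :=
          ((g' _ - g' x₀).le_opNorm v).trans (by gcongr; exact hL _)
      _ = L * ‖v‖ ^ 2 * t := by
          rw [add_sub_cancel_left, norm_smul, Real.norm_of_nonneg ht.1]; ring
  have hB (t : ℝ) : HasDerivAt (fun t => L * ‖v‖ ^ 2 * t ^ 2 / 2) (L * ‖v‖ ^ 2 * t) t := by
    refine (((hasDerivAt_pow 2 t).const_mul (L * ‖v‖ ^ 2)).div_const 2).congr_deriv ?_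
    push_cast
    ring
  have := image_norm_le_of_norm_deriv_right_le_deriv_boundary
    (fun t _ => (hψ t).continuousAt.continuousWithinAt) (fun t _ => (hψ t).hasDerivWithinAt)
    (by simp [ψ]) hB hψ' (Set.right_mem_Icc.2 zero_le_one)
  simpa [ψ, v, div_mul_eq_mul_div] using this

end Taylor

theorem Matrix.IsHermitian.mul_norm_le_norm_toEuclideanLin {𝕜 n : Type*} [RCLike 𝕜] [Fintype n]
    [DecidableEq n] {A : Matrix n n 𝕜} (hA : A.IsHermitian) {c : ℝ} (hc : 0 ≤ c)
    (h : ∀ i, c ≤ |hA.eigenvalues i|) (v : EuclideanSpace 𝕜 n) :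
    c * ‖v‖ ≤ ‖toEuclideanLin A v‖ := by
  set e := hA.eigenvectorBasis
  have hinner (i : n) : ‖⟪e i, toEuclideanLin A v⟫_𝕜‖ = |hA.eigenvalues i| * ‖⟪e i, v⟫_𝕜‖ := by
    have he : toEuclideanLin A (e i) = hA.eigenvalues i • e i := by
      ext k
      simpa [Matrix.toLpLin_apply] using congrFun (hA.mulVec_eigenvectorBasis i) k
    rw [← isSymmetric_toEuclideanLin_iff.mpr hA, he, RCLike.real_smul_eq_coe_smul (K := 𝕜),
      inner_smul_left, norm_mul, RCLike.norm_conj, RCLike.norm_ofReal]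
  have hsq : (c * ‖v‖) ^ 2 ≤ ‖toEuclideanLin A v‖ ^ 2 := by
    rw [← e.sum_sq_norm_inner_right (toEuclideanLin A v), mul_pow, ← e.sum_sq_norm_inner_right v,
      Finset.mul_sum]
    gcongr with i
    rw [hinner, mul_pow]
    gcongr
    exact h i
  exact (pow_le_pow_iff_left₀ (by positivity) (norm_nonneg _) two_ne_zero).mp hsq

theorem fderiv_fderiv_apply_of_hasFDerivAt_gradient {F : Type*} [NormedAddCommGroup F]
    [InnerProductSpace ℝ F] [CompleteSpace F] {f : F → ℝ} {A : F →L[ℝ] F} {x : F}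
    (h : HasFDerivAt (gradient f) A x) (v : F) :
    fderiv ℝ (fderiv ℝ f) x v = innerSL ℝ (A v) := by
  have hf : fderiv ℝ f = innerSL ℝ ∘ gradient f := toDual_comp_gradient.symm
  rw [hf, ((innerSL ℝ).hasFDerivAt.comp x h).fderiv]
  rfl

/-- If `f` is `C³` with `‖D³f‖ ≤ Ĉ` everywhere, and `x*` is a critical point
whose Hessian eigenvalues all have magnitude at least `λmin > 0`, then `f` has
no other critical point within distance `2λmin/Ĉ` of `x*`. -/
theorem stmt_14 {d : ℕ} (f : EuclideanSpace ℝ (Fin d) → ℝ)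
    (hf : ContDiff ℝ 3 f) (Chat : ℝ) (hChat : 0 < Chat)
    (hD3 : ∀ x : EuclideanSpace ℝ (Fin d), ‖iteratedFDeriv ℝ 3 f x‖ ≤ Chat)
    (xstar : EuclideanSpace ℝ (Fin d)) (hcrit : gradient f xstar = 0)
    (H : Matrix (Fin d) (Fin d) ℝ) (hsym : H.IsHermitian)
    (hH : HasFDerivAt (gradient f)
      (Matrix.toEuclideanLin H).toContinuousLinearMap xstar)
    (lmin : ℝ) (hlmin : 0 < lmin)
    (heig : ∀ i : Fin d, lmin ≤ |hsym.eigenvalues i|) :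
    ∀ x : EuclideanSpace ℝ (Fin d),
      x ≠ xstar → ‖x - xstar‖ < 2 * lmin / Chat → gradient f x ≠ 0 := by
  intro x hne hlt hzero
  have hDf : Differentiable ℝ (fderiv ℝ f) :=
    (hf.fderiv_right (m := 2) (by norm_num)).differentiable (by norm_num)
  have hfderiv_eq_zero {y} (hy : gradient f y = 0) : fderiv ℝ f y = 0 := by
    rw [← toDual_gradient, hy, map_zero]
  have hbound : lmin * ‖x - xstar‖ ≤ Chat / 2 * ‖x - xstar‖ ^ 2 :=
    calc lmin * ‖x - xstar‖ ≤ ‖Matrix.toEuclideanLin H (x - xstar)‖ :=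
          hsym.mul_norm_le_norm_toEuclideanLin hlmin.le heig (x - xstar)
      _ = ‖fderiv ℝ f x - fderiv ℝ f xstar - fderiv ℝ (fderiv ℝ f) xstar (x - xstar)‖ := by
          rw [hfderiv_eq_zero hzero, hfderiv_eq_zero hcrit,
            fderiv_fderiv_apply_of_hasFDerivAt_gradient hH, sub_self, zero_sub, norm_neg,
            innerSL_apply_norm, LinearMap.coe_toContinuousLinearMap']
      _ ≤ Chat / 2 * ‖x - xstar‖ ^ 2 :=
          norm_sub_sub_apply_le_of_norm_fderiv_sub_le (fun y => (hDf y).hasFDerivAt)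
            (norm_fderiv_fderiv_sub_le_of_norm_iteratedFDeriv_three_le hf hD3 xstar) x
  have hpos : 0 < ‖x - xstar‖ := norm_pos_iff.2 (sub_ne_zero.2 hne)
  rw [lt_div_iff₀ hChat] at hlt
  nlinarith
end

section
/- Let f : ℝ^d → ℝ be C², let x* be a non-degenerate critical point of f with Hessian condition number κ, and let C > 4. Then for all sufficiently small r > 0, every solution x(t) of the normalized gradient flow ẋ = -∇f(x)/‖∇f(x)‖ defined on its maximal interval [0,T) satisfies ℒ¹({t ∈ [0,T) : x(t) ∈ B_r(x*) \ {x*}}) ≤ C√κ · r. -/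
/-!
Along a normalized gradient flow, `u(t) = f(x(t)) - f(x*)` is strictly decreasing with
`|u'| = ‖∇f(x(t))‖`. Let `m ≤ |λᵢ| ≤ M` bound the eigenvalues of the Hessian `H`. Comparing `f`
with its quadratic model `½⟪y, H y⟫` shows that while `x(t) ∈ B_r(x*)` both `|u| ≤ B := ¾ M r²`
and `|u| ≤ L ‖∇f(x(t))‖²` with `L := 4 / (3m)`. On each of the time sets where `u > 0`, resp.
`u < 0`, the injective function `√|u|` therefore moves with speed at least `1 / (2√L)` inside
`[0, √B]`, which takes time at most `2√(BL) = 2√κ r`.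
-/

open MeasureTheory Set Metric InnerProductSpace
open scoped RealInnerProductSpace Gradient

theorem ContinuousOn.measurableSet_inter_preimage {α β : Type*} [TopologicalSpace α]
    [MeasurableSpace α] [OpensMeasurableSpace α] [TopologicalSpace β] {f : α → β} {s : Set α}
    {U : Set β} (hf : ContinuousOn f s) (hs : MeasurableSet s) (hU : IsOpen U) :
    MeasurableSet (s ∩ f ⁻¹' U) := by
  obtain ⟨V, hV, hVs⟩ := continuousOn_iff'.1 hf U hU
  rw [inter_comm, hVs]
  exact hV.measurableSet.inter hs

theorem volume_le_of_injOn_of_le_abs_deriv {S : Set ℝ} (hS : MeasurableSet S) {v v' : ℝ → ℝ}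
    (hv : ∀ t ∈ S, HasDerivAt v (v' t) t) (hinj : InjOn v S) {a b c : ℝ} (hc : 0 < c)
    (hv' : ∀ t ∈ S, c ≤ |v' t|) (hvS : MapsTo v S (Icc a b)) :
    volume S ≤ ENNReal.ofReal ((b - a) / c) := by
  have key : ENNReal.ofReal c * volume S ≤ ENNReal.ofReal (b - a) :=
    calc ENNReal.ofReal c * volume S = ∫⁻ _ in S, ENNReal.ofReal c := by
          rw [setLIntegral_const, mul_comm]
      _ ≤ ∫⁻ t in S, ENNReal.ofReal |v' t| :=
          setLIntegral_mono' hS fun t ht => ENNReal.ofReal_le_ofReal (hv' t ht)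
      _ = volume (v '' S) := by
          simpa using (lintegral_image_eq_lintegral_abs_deriv_mul hS
            (fun t ht => (hv t ht).hasDerivWithinAt) hinj 1).symm
      _ ≤ volume (Icc a b) := measure_mono hvS.image_subset
      _ = ENNReal.ofReal (b - a) := Real.volume_Icc
  rwa [ENNReal.ofReal_div_of_pos hc, ENNReal.le_div_iff_mul_le (by simp [hc]) (by simp),
    mul_comm]

theorem volume_le_of_pos_of_le_mul_deriv_sq {S : Set ℝ} (hS : MeasurableSet S) {u u' : ℝ → ℝ}
    (hu : ∀ t ∈ S, HasDerivAt u (u' t) t) (hinj : InjOn u S) {B L : ℝ} (hL : 0 < L)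
    (hpos : ∀ t ∈ S, 0 < u t) (hB : ∀ t ∈ S, u t ≤ B) (hu' : ∀ t ∈ S, u t ≤ L * u' t ^ 2) :
    volume S ≤ ENNReal.ofReal (2 * √(B * L)) := by
  have hsqrt_inj : InjOn (fun t => √(u t)) S := fun s hs t ht hst =>
    hinj hs ht <| (Real.sqrt_inj (hpos s hs).le (hpos t ht).le).1 hst
  have hderiv : ∀ t ∈ S, (2 * √L)⁻¹ ≤ |u' t / (2 * √(u t))| := by
    intro t ht
    have hsqrt : √(u t) ≤ √L * |u' t| := by
      rw [← Real.sqrt_sq_eq_abs, ← Real.sqrt_mul hL.le]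
      exact Real.sqrt_le_sqrt (hu' t ht)
    have hut : 0 < √(u t) := Real.sqrt_pos.2 (hpos t ht)
    rw [abs_div, abs_of_pos (by positivity : (0 : ℝ) < 2 * √(u t)),
      le_div_iff₀ (by positivity), inv_mul_le_iff₀ (by positivity)]
    linarith
  have hmaps : MapsTo (fun t => √(u t)) S (Icc 0 √B) := fun t ht =>
    ⟨Real.sqrt_nonneg _, Real.sqrt_le_sqrt (hB t ht)⟩
  convert volume_le_of_injOn_of_le_abs_deriv hS (fun t ht => (hu t ht).sqrt (hpos t ht).ne')
    hsqrt_inj (by positivity) hderiv hmaps using 2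
  rw [Real.sqrt_mul' _ hL.le]
  field_simp
  ring

theorem volume_le_of_abs_le_mul_deriv_sq {S : Set ℝ} (hS : MeasurableSet S) {u u' : ℝ → ℝ}
    (hu : ∀ t ∈ S, HasDerivAt u (u' t) t) (hinj : InjOn u S) {B L : ℝ} (hL : 0 < L)
    (hB : ∀ t ∈ S, |u t| ≤ B) (hu' : ∀ t ∈ S, |u t| ≤ L * u' t ^ 2) :
    volume S ≤ ENNReal.ofReal (4 * √(B * L)) := by
  have hcont : ContinuousOn u S := fun t ht => (hu t ht).continuousAt.continuousWithinAt
  have hcover : S ⊆ (S ∩ u ⁻¹' Ioi 0 ∪ S ∩ u ⁻¹' Iio 0) ∪ S ∩ u ⁻¹' {0} := by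
    intro t ht
    rcases lt_trichotomy (u t) 0 with h | h | h
    exacts [Or.inl (Or.inr ⟨ht, h⟩), Or.inr ⟨ht, h⟩, Or.inl (Or.inl ⟨ht, h⟩)]
  have hpos : volume (S ∩ u ⁻¹' Ioi 0) ≤ ENNReal.ofReal (2 * √(B * L)) :=
    volume_le_of_pos_of_le_mul_deriv_sq (hcont.measurableSet_inter_preimage hS isOpen_Ioi)
      (fun t ht => hu t ht.1) (hinj.mono inter_subset_left) hL (fun t ht => ht.2)
      (fun t ht => (le_abs_self _).trans (hB t ht.1))
      (fun t ht => (le_abs_self _).trans (hu' t ht.1))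
  have hneg : volume (S ∩ u ⁻¹' Iio 0) ≤ ENNReal.ofReal (2 * √(B * L)) :=
    volume_le_of_pos_of_le_mul_deriv_sq (u := fun t => -u t) (u' := fun t => -u' t)
      (hcont.measurableSet_inter_preimage hS isOpen_Iio)
      (fun t ht => (hu t ht.1).neg) (fun s hs t ht hst => hinj hs.1 ht.1 (neg_inj.1 hst)) hL
      (fun t ht => neg_pos.2 ht.2) (fun t ht => (neg_le_abs _).trans (hB t ht.1))
      (fun t ht => by simpa only [neg_sq] using (neg_le_abs _).trans (hu' t ht.1))
  have hzero : volume (S ∩ u ⁻¹' {0}) = 0 :=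
    Subsingleton.measure_zero (fun s hs t ht => hinj hs.1 ht.1 (hs.2.trans ht.2.symm)) _
  calc volume S ≤ volume (S ∩ u ⁻¹' Ioi 0) + volume (S ∩ u ⁻¹' Iio 0) + 0 := by
        rw [← hzero]
        refine (measure_mono hcover).trans <| (measure_union_le _ _).trans ?_
        gcongr
        exact measure_union_le _ _
    _ ≤ ENNReal.ofReal (2 * √(B * L)) + ENNReal.ofReal (2 * √(B * L)) := by
        rw [add_zero]; exact add_le_add hpos hneg
    _ = ENNReal.ofReal (4 * √(B * L)) := by
        rw [← ENNReal.ofReal_add (by positivity) (by positivity)]; ring_nf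

section InnerProductSpace

variable {F : Type*} [NormedAddCommGroup F] [InnerProductSpace ℝ F] [CompleteSpace F]

theorem hasDerivAt_comp_normalized_gradient_flow {f : F → ℝ} {x : ℝ → F} {t : ℝ}
    (hf : DifferentiableAt ℝ f (x t)) (hx : HasDerivAt x (-(‖∇ f (x t)‖⁻¹ • ∇ f (x t))) t)
    (hg : ∇ f (x t) ≠ 0) :
    HasDerivAt (fun s => f (x s)) (-‖∇ f (x t)‖) t := by
  have hslope : toDual ℝ F (∇ f (x t)) (-(‖∇ f (x t)‖⁻¹ • ∇ f (x t))) = -‖∇ f (x t)‖ := by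
    rw [toDual_apply_apply, inner_neg_right, real_inner_smul_right, real_inner_self_eq_norm_sq]
    field_simp [norm_ne_zero_iff.2 hg]
  exact hslope ▸ hf.hasGradientAt.hasFDerivAt.comp_hasDerivAt t hx

theorem strictAntiOn_comp_normalized_gradient_flow {f : F → ℝ} {x : ℝ → F} {D : Set ℝ}
    (hD : Convex ℝ D) (hf : Differentiable ℝ f)
    (hx : ∀ t ∈ D, HasDerivAt x (-(‖∇ f (x t)‖⁻¹ • ∇ f (x t))) t)
    (hg : ∀ t ∈ D, ∇ f (x t) ≠ 0) : StrictAntiOn (fun s => f (x s)) D := by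
  have hderiv := fun t ht => hasDerivAt_comp_normalized_gradient_flow (hf _) (hx t ht) (hg t ht)
  exact strictAntiOn_of_hasDerivWithinAt_neg hD
    (fun t ht => (hderiv t ht).continuousAt.continuousWithinAt)
    (fun t ht => (hderiv t (interior_subset ht)).hasDerivWithinAt)
    (fun t ht => neg_neg_of_pos (norm_pos_iff.2 (hg t (interior_subset ht))))

theorem volume_normalized_gradient_flow_mem_le {f : F → ℝ} {x : ℝ → F} {D : Set ℝ}
    (hD : Convex ℝ D) (hDm : MeasurableSet D) (hf : Differentiable ℝ f)
    (hx : ∀ t ∈ D, HasDerivAt x (-(‖∇ f (x t)‖⁻¹ • ∇ f (x t))) t)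
    (hg : ∀ t ∈ D, ∇ f (x t) ≠ 0) {U : Set F} (hU : IsOpen U) {c B L : ℝ} (hL : 0 < L)
    (hB : ∀ z ∈ U, |f z - c| ≤ B) (hBL : ∀ z ∈ U, |f z - c| ≤ L * ‖∇ f z‖ ^ 2) :
    volume {t ∈ D | x t ∈ U} ≤ ENNReal.ofReal (4 * √(B * L)) := by
  have hanti := strictAntiOn_comp_normalized_gradient_flow hD hf hx hg
  refine volume_le_of_abs_le_mul_deriv_sq (u := fun t => f (x t) - c)
    ((HasDerivAt.continuousOn hx).measurableSet_inter_preimage hDm hU)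
    (fun t ht => (hasDerivAt_comp_normalized_gradient_flow (hf _) (hx t ht.1)
      (hg t ht.1)).sub_const c)
    (fun s hs t ht hst => hanti.injOn hs.1 ht.1 (sub_left_inj.1 hst)) hL
    (fun t ht => hB _ ht.2) (fun t ht => ?_)
  rw [neg_sq]
  exact hBL _ ht.2

theorem hasGradientAt_half_inner_sub_apply {A : F →L[ℝ] F} (hA : (A : F →ₗ[ℝ] F).IsSymmetric)
    (x₀ z : F) : HasGradientAt (fun w => 1 / 2 * ⟪w - x₀, A (w - x₀)⟫) (A (z - x₀)) z := by
  have hsub : HasFDerivAt (fun w : F => w - x₀) (ContinuousLinearMap.id ℝ F) z :=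
    (hasFDerivAt_id z).sub_const x₀
  rw [hasGradientAt_iff_hasFDerivAt]
  refine (((hsub.inner ℝ (A.hasFDerivAt.comp z hsub))).const_mul (1 / 2)).congr_fderiv ?_
  ext h
  have hsymm : ⟪z - x₀, A h⟫ = ⟪A (z - x₀), h⟫ := (hA (z - x₀) h).symm
  simp only [FunLike.coe_smul, Pi.smul_apply, fderivInnerCLM_apply, ContinuousLinearMap.comp_apply,
    ContinuousLinearMap.prod_apply, ContinuousLinearMap.id_apply, toDual_apply_apply, smul_eq_mul,
    Function.comp_apply]
  rw [hsymm, real_inner_comm (A (z - x₀)) h]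
  ring

theorem abs_sub_sub_half_inner_le {f : F → ℝ} (hf : Differentiable ℝ f) {A : F →L[ℝ] F}
    (hA : (A : F →ₗ[ℝ] F).IsSymmetric) {x₀ : F} {r ε : ℝ} (hε : 0 ≤ ε)
    (hgrad : ∀ z ∈ ball x₀ r, ‖∇ f z - A (z - x₀)‖ ≤ ε * ‖z - x₀‖) {p : F} (hp : p ∈ ball x₀ r) :
    |f p - f x₀ - 1 / 2 * ⟪p - x₀, A (p - x₀)⟫| ≤ ε * ‖p - x₀‖ ^ 2 := by
  set φ : F → ℝ := fun z => f z - f x₀ - 1 / 2 * ⟪z - x₀, A (z - x₀)⟫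
  have hφ : ∀ z, HasFDerivAt φ (toDual ℝ F (∇ f z - A (z - x₀))) z := fun z => by
    rw [map_sub]
    exact ((hf z).hasGradientAt.hasFDerivAt.sub_const (f x₀)).sub
      (hasGradientAt_half_inner_sub_apply hA x₀ z).hasFDerivAt
  have hball : closedBall x₀ ‖p - x₀‖ ⊆ ball x₀ r :=
    closedBall_subset_ball (by rwa [← dist_eq_norm, ← mem_ball])
  have hbound : ∀ z ∈ closedBall x₀ ‖p - x₀‖, ‖toDual ℝ F (∇ f z - A (z - x₀))‖ ≤ ε * ‖p - x₀‖ :=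
    fun z hz => by
      rw [LinearIsometryEquiv.norm_map]
      exact (hgrad z (hball hz)).trans
        (mul_le_mul_of_nonneg_left (by rwa [← dist_eq_norm, ← mem_closedBall]) hε)
  have := (convex_closedBall x₀ ‖p - x₀‖).norm_image_sub_le_of_norm_hasFDerivWithin_le
    (fun z _ => (hφ z).hasFDerivWithinAt) hbound (mem_closedBall_self (norm_nonneg _))
    (by rw [mem_closedBall, dist_eq_norm])
  simpa [φ, sq, mul_assoc] using this

end InnerProductSpace

theorem HasFDerivAt.exists_ball_norm_sub_sub_le {E F : Type*} [NormedAddCommGroup E]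
    [NormedSpace ℝ E] [NormedAddCommGroup F] [NormedSpace ℝ F] {g : E → F} {A : E →L[ℝ] F}
    {x₀ : E} (hg : HasFDerivAt g A x₀) {ε : ℝ} (hε : 0 < ε) :
    ∃ r > 0, ∀ z ∈ ball x₀ r, ‖g z - g x₀ - A (z - x₀)‖ ≤ ε * ‖z - x₀‖ :=
  Metric.eventually_nhds_iff_ball.1 (hg.isLittleO.def hε)

namespace Matrix.IsHermitian

variable {n : Type*} [Fintype n] [DecidableEq n] {H : Matrix n n ℝ} (hH : H.IsHermitian)

theorem inner_eigenvectorBasis_toEuclideanLin (i : n) (y : EuclideanSpace ℝ n) :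
    ⟪hH.eigenvectorBasis i, toEuclideanLin H y⟫ =
      hH.eigenvalues i * ⟪hH.eigenvectorBasis i, y⟫ := by
  have hb : toEuclideanLin H (hH.eigenvectorBasis i) =
      hH.eigenvalues i • hH.eigenvectorBasis i := by
    ext j
    simpa [toLpLin_apply] using congrFun (hH.mulVec_eigenvectorBasis i) j
  rw [← isSymmetric_toEuclideanLin_iff.2 hH, hb, real_inner_smul_left]

theorem inner_toEuclideanLin_self_eq_sum (y : EuclideanSpace ℝ n) :
    ⟪y, toEuclideanLin H y⟫ = ∑ i, hH.eigenvalues i * ⟪hH.eigenvectorBasis i, y⟫ ^ 2 := by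
  rw [← hH.eigenvectorBasis.sum_inner_mul_inner]
  refine Finset.sum_congr rfl fun i _ => ?_
  rw [hH.inner_eigenvectorBasis_toEuclideanLin, real_inner_comm]
  ring

theorem norm_toEuclideanLin_sq_eq_sum (y : EuclideanSpace ℝ n) :
    ‖toEuclideanLin H y‖ ^ 2 = ∑ i, (hH.eigenvalues i * ⟪hH.eigenvectorBasis i, y⟫) ^ 2 := by
  simp_rw [← hH.eigenvectorBasis.sum_sq_inner_right, hH.inner_eigenvectorBasis_toEuclideanLin]

theorem eigenvalues_ne_zero_of_isUnit (hu : IsUnit H) (i : n) : hH.eigenvalues i ≠ 0 := by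
  have hdet := ((Matrix.isUnit_iff_isUnit_det H).1 hu).ne_zero
  rw [hH.det_eq_prod_eigenvalues, Finset.prod_ne_zero_iff] at hdet
  simpa using hdet i (Finset.mem_univ i)

variable {m M : ℝ}

theorem mul_norm_le_norm_toEuclideanLin_s17 (hm0 : 0 ≤ m) (hm : ∀ i, m ≤ |hH.eigenvalues i|)
    (y : EuclideanSpace ℝ n) : m * ‖y‖ ≤ ‖toEuclideanLin H y‖ := by
  refine (pow_le_pow_iff_left₀ (by positivity) (norm_nonneg _) two_ne_zero).1 ?_
  rw [mul_pow, hH.norm_toEuclideanLin_sq_eq_sum, ← hH.eigenvectorBasis.sum_sq_inner_right,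
    Finset.mul_sum]
  refine Finset.sum_le_sum fun i _ => ?_
  rw [mul_pow, ← sq_abs (hH.eigenvalues i)]
  gcongr
  exact hm i

theorem mul_abs_inner_toEuclideanLin_self_le (hm0 : 0 ≤ m) (hm : ∀ i, m ≤ |hH.eigenvalues i|)
    (y : EuclideanSpace ℝ n) : m * |⟪y, toEuclideanLin H y⟫| ≤ ‖toEuclideanLin H y‖ ^ 2 := by
  rw [hH.inner_toEuclideanLin_self_eq_sum, hH.norm_toEuclideanLin_sq_eq_sum]
  refine (mul_le_mul_of_nonneg_left (Finset.abs_sum_le_sum_abs _ _) hm0).trans ?_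
  rw [Finset.mul_sum]
  refine Finset.sum_le_sum fun i _ => ?_
  rw [abs_mul, abs_sq, mul_pow, ← sq_abs (hH.eigenvalues i), ← mul_assoc]
  gcongr
  nlinarith [hm i, abs_nonneg (hH.eigenvalues i)]

theorem abs_inner_toEuclideanLin_self_le (hM : ∀ i, |hH.eigenvalues i| ≤ M)
    (y : EuclideanSpace ℝ n) : |⟪y, toEuclideanLin H y⟫| ≤ M * ‖y‖ ^ 2 := by
  rw [hH.inner_toEuclideanLin_self_eq_sum, ← hH.eigenvectorBasis.sum_sq_inner_right,
    Finset.mul_sum]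
  refine (Finset.abs_sum_le_sum_abs _ _).trans (Finset.sum_le_sum fun i _ => ?_)
  rw [abs_mul, abs_sq]
  exact mul_le_mul_of_nonneg_right (hM i) (sq_nonneg _)

end Matrix.IsHermitian

section LocalEstimates

variable {n : Type*} [Fintype n] [DecidableEq n] {H : Matrix n n ℝ}
  {f : EuclideanSpace ℝ n → ℝ} {x₀ z : EuclideanSpace ℝ n} {m M δ r : ℝ}

theorem abs_sub_half_inner_toEuclideanLin_le (hH : H.IsHermitian) (hf : Differentiable ℝ f)
    (hm0 : 0 ≤ m) (hδ0 : 0 ≤ δ)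
    (hgrad : ∀ z ∈ ball x₀ r, ‖∇ f z - Matrix.toEuclideanLin H (z - x₀)‖ ≤ δ * m * ‖z - x₀‖)
    (hz : z ∈ ball x₀ r) :
    |f z - f x₀ - 1 / 2 * ⟪z - x₀, Matrix.toEuclideanLin H (z - x₀)⟫| ≤
      δ * m * ‖z - x₀‖ ^ 2 :=
  abs_sub_sub_half_inner_le (A := (Matrix.toEuclideanLin H).toContinuousLinearMap) hf
    (Matrix.isSymmetric_toEuclideanLin_iff.2 hH) (by positivity) hgrad hz

theorem abs_sub_le_mul_norm_sub_sq (hH : H.IsHermitian) (hf : Differentiable ℝ f)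
    (hm0 : 0 ≤ m) (hmM : m ≤ M) (hM : ∀ i, |hH.eigenvalues i| ≤ M) (hδ0 : 0 ≤ δ)
    (hgrad : ∀ z ∈ ball x₀ r, ‖∇ f z - Matrix.toEuclideanLin H (z - x₀)‖ ≤ δ * m * ‖z - x₀‖)
    (hz : z ∈ ball x₀ r) : |f z - f x₀| ≤ (1 + 2 * δ) / 2 * M * ‖z - x₀‖ ^ 2 := by
  have htaylor := abs_sub_half_inner_toEuclideanLin_le hH hf hm0 hδ0 hgrad hz
  have hquad := hH.abs_inner_toEuclideanLin_self_le hM (z - x₀)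
  have hδm : δ * m * ‖z - x₀‖ ^ 2 ≤ δ * M * ‖z - x₀‖ ^ 2 := by gcongr
  have := abs_sub_abs_le_abs_sub (f z - f x₀)
    (1 / 2 * ⟪z - x₀, Matrix.toEuclideanLin H (z - x₀)⟫)
  rw [abs_mul, abs_of_pos (by norm_num : (0 : ℝ) < 1 / 2)] at this
  nlinarith

theorem mul_abs_sub_le_norm_gradient_sq (hH : H.IsHermitian) (hf : Differentiable ℝ f)
    (hm0 : 0 ≤ m) (hm : ∀ i, m ≤ |hH.eigenvalues i|) (hδ0 : 0 ≤ δ) (hδ1 : δ ≤ 1)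
    (hgrad : ∀ z ∈ ball x₀ r, ‖∇ f z - Matrix.toEuclideanLin H (z - x₀)‖ ≤ δ * m * ‖z - x₀‖)
    (hz : z ∈ ball x₀ r) : 2 * m * (1 - δ) ^ 2 * |f z - f x₀| ≤ (1 + 2 * δ) * ‖∇ f z‖ ^ 2 := by
  set Hy := Matrix.toEuclideanLin H (z - x₀)
  have hlower := hH.mul_norm_le_norm_toEuclideanLin_s17 hm0 hm (z - x₀)
  have hquad := hH.mul_abs_inner_toEuclideanLin_self_le hm0 hm (z - x₀)
  have htaylor := abs_sub_half_inner_toEuclideanLin_le hH hf hm0 hδ0 hgrad hz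
  have hgrad_lower : (1 - δ) * ‖Hy‖ ≤ ‖∇ f z‖ := by
    have := norm_sub_norm_le Hy (∇ f z)
    rw [norm_sub_rev] at this
    nlinarith [hgrad z hz]
  have hmodel : 2 * m * |f z - f x₀| ≤ (1 + 2 * δ) * ‖Hy‖ ^ 2 := by
    have := abs_sub_abs_le_abs_sub (f z - f x₀) (1 / 2 * ⟪z - x₀, Hy⟫)
    rw [abs_mul, abs_of_pos (by norm_num : (0 : ℝ) < 1 / 2)] at this
    nlinarith [mul_le_mul hlower hlower (by positivity) (norm_nonneg _)]
  calc 2 * m * (1 - δ) ^ 2 * |f z - f x₀| ≤ (1 + 2 * δ) * ((1 - δ) * ‖Hy‖) ^ 2 := by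
        nlinarith [sq_nonneg (1 - δ)]
    _ ≤ (1 + 2 * δ) * ‖∇ f z‖ ^ 2 := by gcongr

theorem exists_ball_abs_sub_le_and_le_norm_gradient_sq (hH : H.IsHermitian)
    (hf : Differentiable ℝ f) (hcrit : ∇ f x₀ = 0)
    (hHf : HasFDerivAt (∇ f) (Matrix.toEuclideanLin H).toContinuousLinearMap x₀) (hm0 : 0 < m)
    (hmM : m ≤ M) (hm : ∀ i, m ≤ |hH.eigenvalues i|) (hM : ∀ i, |hH.eigenvalues i| ≤ M) :
    ∃ r₀ > 0, ∀ z ∈ ball x₀ r₀, |f z - f x₀| ≤ 3 / 4 * M * ‖z - x₀‖ ^ 2 ∧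
      |f z - f x₀| ≤ 4 / (3 * m) * ‖∇ f z‖ ^ 2 := by
  -- `δ = 1/4` gives `(3/4 * M) * (4 / (3 * m)) = κ`, hence the constant `4` of the theorem
  obtain ⟨r₀, hr₀, hgrad⟩ := hHf.exists_ball_norm_sub_sub_le (by positivity : 0 < 1 / 4 * m)
  simp only [hcrit, sub_zero, LinearMap.coe_toContinuousLinearMap'] at hgrad
  refine ⟨r₀, hr₀, fun z hz => ⟨?_, ?_⟩⟩
  · have := abs_sub_le_mul_norm_sub_sq hH hf hm0.le hmM hM (by norm_num) hgrad hz
    norm_num at this ⊢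
    exact this
  · have := mul_abs_sub_le_norm_gradient_sq hH hf hm0.le hm (by norm_num) (by norm_num) hgrad hz
    rw [div_mul_eq_mul_div, le_div_iff₀ (by positivity)]
    linarith

end LocalEstimates

/-- Saddle-point escape time: if `x*` is a non-degenerate critical point of a
`C²` function `f` with Hessian condition number `κ` and `C > 4`, then for all
sufficiently small `r > 0`, every solution of the normalized gradient flow on
`[0,T)` spends time at most `C√κ·r` in `B_r(x*) \ {x*}`. -/
theorem stmt_17 {d : ℕ} [NeZero d] (f : EuclideanSpace ℝ (Fin d) → ℝ)
    (hf : ContDiff ℝ 2 f)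
    (xstar : EuclideanSpace ℝ (Fin d)) (hcrit : gradient f xstar = 0)
    (H : Matrix (Fin d) (Fin d) ℝ) (hsym : H.IsHermitian) (hinv : IsUnit H)
    (hH : HasFDerivAt (gradient f)
      (Matrix.toEuclideanLin H).toContinuousLinearMap xstar)
    (κ : ℝ)
    (hκ : κ = (Finset.univ.sup' Finset.univ_nonempty fun i => |hsym.eigenvalues i|) /
              (Finset.univ.inf' Finset.univ_nonempty fun i => |hsym.eigenvalues i|))
    (C : ℝ) (hC : 4 < C) :
    ∃ r₀ > (0:ℝ), ∀ r : ℝ, 0 < r → r < r₀ →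
      ∀ (T : ℝ) (x : ℝ → EuclideanSpace ℝ (Fin d)),
        (∀ t ∈ Set.Ico (0:ℝ) T,
          HasDerivAt x (-(‖gradient f (x t)‖⁻¹ • gradient f (x t))) t) →
        (∀ t ∈ Set.Ico (0:ℝ) T, gradient f (x t) ≠ 0) →
        volume {t ∈ Set.Ico (0:ℝ) T | x t ∈ Metric.ball xstar r \ {xstar}} ≤
          ENNReal.ofReal (C * Real.sqrt κ * r) := by
  set M := Finset.univ.sup' Finset.univ_nonempty fun i => |hsym.eigenvalues i|
  set m := Finset.univ.inf' Finset.univ_nonempty fun i => |hsym.eigenvalues i|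
  have hM : ∀ i, |hsym.eigenvalues i| ≤ M := fun i =>
    Finset.le_sup' (fun j => |hsym.eigenvalues j|) (Finset.mem_univ i)
  have hm : ∀ i, m ≤ |hsym.eigenvalues i| := fun i =>
    Finset.inf'_le (fun j => |hsym.eigenvalues j|) (Finset.mem_univ i)
  have hm0 : 0 < m := (Finset.lt_inf'_iff _).2 fun i _ =>
    abs_pos.2 (hsym.eigenvalues_ne_zero_of_isUnit hinv i)
  have hmM : m ≤ M := (hm 0).trans (hM 0)
  have hf' : Differentiable ℝ f := hf.differentiable two_ne_zero
  obtain ⟨r₀, hr₀, hlocal⟩ :=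
    exists_ball_abs_sub_le_and_le_norm_gradient_sq hsym hf' hcrit hH hm0 hmM hm hM
  refine ⟨r₀, hr₀, fun r hr hrr₀ T x hx hg => ?_⟩
  have hB : ∀ z ∈ Metric.ball xstar r \ {xstar}, |f z - f xstar| ≤ 3 / 4 * M * r ^ 2 := by
    rintro z ⟨hz, -⟩
    have hzr : ‖z - xstar‖ < r := by rwa [← dist_eq_norm, ← Metric.mem_ball]
    refine ((hlocal z (Metric.ball_subset_ball hrr₀.le hz)).1).trans ?_
    have := hm0.le.trans hmM
    gcongr
  have hBL : 3 / 4 * M * r ^ 2 * (4 / (3 * m)) = κ * r ^ 2 := by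
    rw [hκ]
    field_simp
  refine (volume_normalized_gradient_flow_mem_le (convex_Ico 0 T) measurableSet_Ico hf' hx hg
    (isOpen_ball.sdiff isClosed_singleton) (by positivity) hB
    fun z hz => (hlocal z (Metric.ball_subset_ball hrr₀.le hz.1)).2).trans
    (ENNReal.ofReal_le_ofReal ?_)
  rw [hBL, Real.sqrt_mul' _ (sq_nonneg r), Real.sqrt_sq hr.le, ← mul_assoc]
  gcongr
end
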